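/- Let M be a proper hypersurface of ℝ^{n+1} and suppose (M, g, x^T, λ, μ) is a quasi-Yamabe soliton with μ ≠ 0. Then the shape operator A_{x^N} of M in the direction of the normal component x^N of the position vector satisfies A_{x^N} x^T = (R − λ − 1 + μ |x^T|²) x^T, and A_{x^N} Z = (R − λ − 1) Z for every tangent vector Z orthogonal to x^T; equivalently, A_{x^N} V = (R − λ − 1) V + μ g(x^T, V) x^T for all tangent vectors V, where R is the scalar curvature of M. -/

import Mathlib

open scoped RealInnerProductSpace

noncomputable section

/-- Extrinsic data of a Riemannian submanifold `M` of the Euclidean space `ℝ^m`,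
recorded through: the position vector field `pos` (i.e. the isometric immersion
`x`), the tangent spaces `tangent p ⊆ ℝ^m`, the ambient Euclidean covariant
derivative `amb` (`∇̃`), the induced Levi-Civita connection `conn` (`∇`), the
second fundamental form `sff` (`h`), the shape operator `shape` (`A`) and the
normal connection `normConn` (`D`), subject to the formulas of Gauss and of
Weingarten.  Since the immersion is isometric, the induced metric is
`g(v, w) = ⟪v, w⟫` on tangent vectors. -/
structure EuclideanSubmanifold (m : ℕ) where
  /-- the underlying manifold -/
  M : Type
  /-- the topology of `M` -/
  topology : TopologicalSpace M
  /-- the position vector field `x`, i.e. the isometric immersion into `ℝ^m` -/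
  pos : M → EuclideanSpace ℝ (Fin m)
  /-- the tangent space at each point, viewed as a subspace of `ℝ^m` -/
  tangent : M → Submodule ℝ (EuclideanSpace ℝ (Fin m))
  /-- the ambient Euclidean covariant derivative `∇̃` of an `ℝ^m`-valued field
  along a (tangent) vector field -/
  amb : (M → EuclideanSpace ℝ (Fin m)) → (M → EuclideanSpace ℝ (Fin m)) →
    (M → EuclideanSpace ℝ (Fin m))
  /-- the Levi-Civita connection `∇` of the induced metric -/
  conn : (M → EuclideanSpace ℝ (Fin m)) → (M → EuclideanSpace ℝ (Fin m)) →
    (M → EuclideanSpace ℝ (Fin m))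
  /-- the second fundamental form `h` (pointwise, on tangent vectors) -/
  sff : M → EuclideanSpace ℝ (Fin m) → EuclideanSpace ℝ (Fin m) →
    EuclideanSpace ℝ (Fin m)
  /-- the shape operator `A η v` (pointwise: normal vector `η`, tangent vector `v`) -/
  shape : M → EuclideanSpace ℝ (Fin m) → EuclideanSpace ℝ (Fin m) →
    EuclideanSpace ℝ (Fin m)
  /-- the normal connection `D` -/
  normConn : (M → EuclideanSpace ℝ (Fin m)) → (M → EuclideanSpace ℝ (Fin m)) →
    (M → EuclideanSpace ℝ (Fin m))
  amb_add : ∀ X Y Z, amb X (fun p => Y p + Z p) = fun p => amb X Y p + amb X Z p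
  conn_tangent : ∀ X Y, (∀ p, X p ∈ tangent p) → (∀ p, Y p ∈ tangent p) →
    ∀ p, conn X Y p ∈ tangent p
  sff_normal : ∀ p v w, sff p v w ∈ (tangent p)ᗮ
  sff_symm : ∀ p v w, sff p v w = sff p w v
  shape_tangent : ∀ p η v, shape p η v ∈ tangent p
  normConn_normal : ∀ X η, (∀ p, X p ∈ tangent p) → (∀ p, η p ∈ (tangent p)ᗮ) →
    ∀ p, normConn X η p ∈ (tangent p)ᗮ
  /-- the formula of Gauss: `∇̃_X Y = ∇_X Y + h(X, Y)` -/
  gauss : ∀ X Y, (∀ p, X p ∈ tangent p) → (∀ p, Y p ∈ tangent p) →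
    ∀ p, amb X Y p = conn X Y p + sff p (X p) (Y p)
  /-- the formula of Weingarten: `∇̃_X η = −A_η X + D_X η` -/
  weingarten : ∀ X η, (∀ p, X p ∈ tangent p) → (∀ p, η p ∈ (tangent p)ᗮ) →
    ∀ p, amb X η p = -shape p (η p) (X p) + normConn X η p
  /-- `⟨h(X, Y), η⟩ = g(A_η X, Y)` -/
  shape_sff : ∀ p v w η, v ∈ tangent p → w ∈ tangent p → η ∈ (tangent p)ᗮ →
    ⟪sff p v w, η⟫ = ⟪shape p η v, w⟫
  /-- the position vector field is concurrent: `∇̃_V x = V` -/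
  concurrent : ∀ X, (∀ p, X p ∈ tangent p) → amb X pos = X

attribute [instance] EuclideanSubmanifold.topology

namespace EuclideanSubmanifold

variable {m : ℕ} (S : EuclideanSubmanifold m)

/-- The tangential component `x^T` of the position vector field. -/
def posT (p : S.M) : EuclideanSpace ℝ (Fin m) :=
  ((S.tangent p).orthogonalProjection (S.pos p) : EuclideanSpace ℝ (Fin m))

/-- The normal component `x^N` of the position vector field, so `x = x^T + x^N`. -/
def posN (p : S.M) : EuclideanSpace ℝ (Fin m) :=
  S.pos p - S.posT p

/-- A vector field on `M` is tangent if it takes values in the tangent spaces. -/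
def IsTangent (X : S.M → EuclideanSpace ℝ (Fin m)) : Prop :=
  ∀ p, X p ∈ S.tangent p

/-- The Lie derivative of the induced metric along a vector field `X`, expressed
through the Levi-Civita connection: `(L_X g)(V, W) = g(∇_V X, W) + g(∇_W X, V)`. -/
def lieDeriv (X V W : S.M → EuclideanSpace ℝ (Fin m)) (p : S.M) : ℝ :=
  ⟪S.conn V X p, W p⟫ + ⟪S.conn W X p, V p⟫

/-- The Riemann curvature `(0,4)`-tensor of `M`, obtained from the equation of
Gauss (the ambient Euclidean space being flat):
`⟨R(X,Y)Z, W⟩ = ⟨h(X,W), h(Y,Z)⟩ − ⟨h(X,Z), h(Y,W)⟩`. -/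
def rm (p : S.M) (x y z w : EuclideanSpace ℝ (Fin m)) : ℝ :=
  ⟪S.sff p x w, S.sff p y z⟫ - ⟪S.sff p x z, S.sff p y w⟫

/-- The Ricci tensor of `M`, the trace of the curvature tensor over an
orthonormal basis of the tangent space. -/
def ricci (p : S.M) (x y : EuclideanSpace ℝ (Fin m)) : ℝ :=
  ∑ i, S.rm p (stdOrthonormalBasis ℝ (S.tangent p) i : EuclideanSpace ℝ (Fin m))
    x y (stdOrthonormalBasis ℝ (S.tangent p) i : EuclideanSpace ℝ (Fin m))

/-- The scalar curvature `R` of `M`: the sum `∑_{i ≠ j} K_{ij}` of sectional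
curvatures over an orthonormal basis of the tangent space (the diagonal terms
of the double trace vanish). -/
def scal (p : S.M) : ℝ :=
  ∑ i, S.ricci p (stdOrthonormalBasis ℝ (S.tangent p) i : EuclideanSpace ℝ (Fin m))
    (stdOrthonormalBasis ℝ (S.tangent p) i : EuclideanSpace ℝ (Fin m))

/-- `(M, g, X, λ)` is a Yamabe soliton: `(1/2) L_X g = (R − λ) g`. -/
def IsYamabeSoliton (X : S.M → EuclideanSpace ℝ (Fin m)) (l : ℝ) : Prop :=
  ∀ V W, S.IsTangent V → S.IsTangent W → ∀ p,
    (1 / 2) * S.lieDeriv X V W p = (S.scal p - l) * ⟪V p, W p⟫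

/-- `(M, g, X, λ, μ)` is a quasi-Yamabe soliton:
`(1/2) L_X g = (R − λ) g + μ X^♯ ⊗ X^♯`, where `X^♯` is the 1-form dual to `X`. -/
def IsQuasiYamabeSoliton (X : S.M → EuclideanSpace ℝ (Fin m)) (l : ℝ)
    (μ : S.M → ℝ) : Prop :=
  ∀ V W, S.IsTangent V → S.IsTangent W → ∀ p,
    (1 / 2) * S.lieDeriv X V W p =
      (S.scal p - l) * ⟪V p, W p⟫ + μ p * ⟪X p, V p⟫ * ⟪X p, W p⟫

end EuclideanSubmanifold

/-! Since the position vector is concurrent, `∇̃_X x = X`. Splitting `x = x^T + x^N` and taking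
tangential parts with the formulas of Gauss and Weingarten gives `∇_X x^T = X + A_{x^N} X`, so by
the symmetry of `A_{x^N}` we get `(1/2)(L_{x^T} g)(V, W) = g(V, W) + g(A_{x^N} V, W)`. The soliton
equation therefore prescribes `g(A_{x^N} V, W)` for every tangent `W`, which determines
`A_{x^N} V`. -/

theorem Submodule.eq_of_forall_inner_eq {E : Type*} [NormedAddCommGroup E]
    [InnerProductSpace ℝ E] {K : Submodule ℝ E} {a b : E} (ha : a ∈ K) (hb : b ∈ K)
    (h : ∀ w ∈ K, ⟪a, w⟫ = ⟪b, w⟫) : a = b := by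
  have hab : ⟪a - b, a - b⟫ = 0 := by
    rw [inner_sub_left, h _ (sub_mem ha hb), sub_self]
  exact sub_eq_zero.mp (inner_self_eq_zero.mp hab)

namespace EuclideanSubmanifold

section

variable {m : ℕ} (S : EuclideanSubmanifold m)

theorem isTangent_posT : S.IsTangent S.posT := fun p =>
  (S.tangent p).starProjection_apply_mem (S.pos p)

theorem posN_mem_orthogonal (p : S.M) : S.posN p ∈ (S.tangent p)ᗮ :=
  (S.tangent p).sub_starProjection_mem_orthogonal (S.pos p)

theorem posT_add_posN : (fun p => S.posT p + S.posN p) = S.pos := by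
  funext p
  simp [posN]

theorem inner_shape_comm {p : S.M} {η v w : EuclideanSpace ℝ (Fin m)}
    (hη : η ∈ (S.tangent p)ᗮ) (hv : v ∈ S.tangent p) (hw : w ∈ S.tangent p) :
    ⟪S.shape p η v, w⟫ = ⟪S.shape p η w, v⟫ := by
  rw [← S.shape_sff p v w η hv hw hη, ← S.shape_sff p w v η hw hv hη, S.sff_symm]

theorem conn_posT {X : S.M → EuclideanSpace ℝ (Fin m)} (hX : S.IsTangent X) (p : S.M) :
    S.conn X S.posT p = X p + S.shape p (S.posN p) (X p) := by
  have hpos := congrFun (S.concurrent X hX) p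
  rw [← S.posT_add_posN, congrFun (S.amb_add X S.posT S.posN) p,
    S.gauss X S.posT hX S.isTangent_posT p,
    S.weingarten X S.posN hX S.posN_mem_orthogonal p] at hpos
  set d := S.conn X S.posT p - S.shape p (S.posN p) (X p) - X p with hd_def
  have hd_tangent : d ∈ S.tangent p :=
    sub_mem (sub_mem (S.conn_tangent X S.posT hX S.isTangent_posT p)
      (S.shape_tangent p _ _)) (hX p)
  have hd_normal : d ∈ (S.tangent p)ᗮ := by
    have hd : d + (S.sff p (X p) (S.posT p) + S.normConn X S.posN p) = 0 :=
      calc _ = S.conn X S.posT p + S.sff p (X p) (S.posT p)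
              + (-S.shape p (S.posN p) (X p) + S.normConn X S.posN p) - X p := by
            rw [hd_def]; abel
        _ = 0 := by rw [hpos, sub_self]
    rw [eq_neg_of_add_eq_zero_left hd]
    exact neg_mem (add_mem (S.sff_normal p _ _)
      (S.normConn_normal X S.posN hX S.posN_mem_orthogonal p))
  have hd0 : d = 0 :=
    Submodule.disjoint_def.mp (S.tangent p).orthogonal_disjoint d hd_tangent hd_normal
  rw [hd_def, sub_sub, sub_eq_zero] at hd0
  exact hd0.trans (add_comm _ _)

theorem lieDeriv_posT {V W : S.M → EuclideanSpace ℝ (Fin m)} (hV : S.IsTangent V)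
    (hW : S.IsTangent W) (p : S.M) :
    S.lieDeriv S.posT V W p = 2 * ⟪V p, W p⟫ + 2 * ⟪S.shape p (S.posN p) (V p), W p⟫ := by
  rw [lieDeriv, S.conn_posT hV, S.conn_posT hW, inner_add_left, inner_add_left,
    S.inner_shape_comm (S.posN_mem_orthogonal p) (hW p) (hV p), real_inner_comm (W p)]
  ring

def tangentExtension (v : EuclideanSpace ℝ (Fin m)) (q : S.M) : EuclideanSpace ℝ (Fin m) :=
  (S.tangent q).starProjection v

theorem isTangent_tangentExtension (v : EuclideanSpace ℝ (Fin m)) :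
    S.IsTangent (S.tangentExtension v) := fun q =>
  (S.tangent q).starProjection_apply_mem v

theorem tangentExtension_apply_of_mem {p : S.M} {v : EuclideanSpace ℝ (Fin m)}
    (hv : v ∈ S.tangent p) : S.tangentExtension v p = v :=
  (S.tangent p).starProjection_eq_self_iff.mpr hv

theorem inner_shape_posN_of_isQuasiYamabeSoliton {l : ℝ} {μ : S.M → ℝ}
    (hsol : S.IsQuasiYamabeSoliton S.posT l μ) {p : S.M} {v w : EuclideanSpace ℝ (Fin m)}
    (hv : v ∈ S.tangent p) (hw : w ∈ S.tangent p) :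
    ⟪S.shape p (S.posN p) v, w⟫ =
      (S.scal p - l - 1) * ⟪v, w⟫ + μ p * ⟪S.posT p, v⟫ * ⟪S.posT p, w⟫ := by
  have h := hsol _ _ (S.isTangent_tangentExtension v) (S.isTangent_tangentExtension w) p
  rw [S.lieDeriv_posT (S.isTangent_tangentExtension v) (S.isTangent_tangentExtension w),
    S.tangentExtension_apply_of_mem hv, S.tangentExtension_apply_of_mem hw] at h
  linarith

theorem shape_posN_of_isQuasiYamabeSoliton {l : ℝ} {μ : S.M → ℝ}
    (hsol : S.IsQuasiYamabeSoliton S.posT l μ) {p : S.M} {v : EuclideanSpace ℝ (Fin m)}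
    (hv : v ∈ S.tangent p) :
    S.shape p (S.posN p) v = (S.scal p - l - 1) • v + (μ p * ⟪S.posT p, v⟫) • S.posT p := by
  refine Submodule.eq_of_forall_inner_eq (S.shape_tangent p _ _)
    (add_mem (Submodule.smul_mem _ _ hv) (Submodule.smul_mem _ _ (S.isTangent_posT p)))
    fun w hw => ?_
  rw [S.inner_shape_posN_of_isQuasiYamabeSoliton hsol hv hw, inner_add_left,
    real_inner_smul_left, real_inner_smul_left]

end

theorem shape_posN_formulas_general {n : ℕ} (S : EuclideanSubmanifold (n + 1))
    (l : ℝ) (μ : S.M → ℝ)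
    (hsol : S.IsQuasiYamabeSoliton S.posT l μ) :
    ∀ p, (S.shape p (S.posN p) (S.posT p) =
            (S.scal p - l - 1 + μ p * ‖S.posT p‖ ^ 2) • S.posT p) ∧
      (∀ z ∈ S.tangent p, ⟪z, S.posT p⟫ = 0 →
        S.shape p (S.posN p) z = (S.scal p - l - 1) • z) ∧
      (∀ v ∈ S.tangent p, S.shape p (S.posN p) v =
        (S.scal p - l - 1) • v + (μ p * ⟪S.posT p, v⟫) • S.posT p) := by
  intro p
  refine ⟨?_, fun z hz hz_orth => ?_, fun v hv => S.shape_posN_of_isQuasiYamabeSoliton hsol hv⟩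
  · rw [S.shape_posN_of_isQuasiYamabeSoliton hsol (S.isTangent_posT p),
      real_inner_self_eq_norm_sq, ← add_smul]
  · rw [S.shape_posN_of_isQuasiYamabeSoliton hsol hz, real_inner_comm, hz_orth,
      mul_zero, zero_smul, add_zero]

/-- **Formulas (4.4)–(4.6).** Let `M` be a proper hypersurface of `ℝ^{n+1}`
and suppose `(M, g, x^T, λ, μ)` is a quasi-Yamabe soliton with `μ ≠ 0`.  Then
the shape operator `A_{x^N}` in the direction of the normal component `x^N` of
the position vector satisfies
`A_{x^N} x^T = (R − λ − 1 + μ |x^T|²) x^T`, and `A_{x^N} Z = (R − λ − 1) Z`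
for every tangent vector `Z` orthogonal to `x^T`; equivalently,
`A_{x^N} V = (R − λ − 1) V + μ g(x^T, V) x^T` for all tangent vectors `V`,
where `R` is the scalar curvature of `M`. -/
theorem shape_posN_formulas {n : ℕ} (S : EuclideanSubmanifold (n + 1))
    (hdim : ∀ p, Module.finrank ℝ (S.tangent p) = n)
    (hproper : ∃ U : Set S.M, IsOpen U ∧ Dense U ∧
      ∀ p ∈ U, S.posT p ≠ 0 ∧ S.posN p ≠ 0)
    (l : ℝ) (μ : S.M → ℝ) (hμ : ∀ p, μ p ≠ 0)
    (hsol : S.IsQuasiYamabeSoliton S.posT l μ) :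
    ∀ p, (S.shape p (S.posN p) (S.posT p) =
            (S.scal p - l - 1 + μ p * ‖S.posT p‖ ^ 2) • S.posT p) ∧
      (∀ z ∈ S.tangent p, ⟪z, S.posT p⟫ = 0 →
        S.shape p (S.posN p) z = (S.scal p - l - 1) • z) ∧
      (∀ v ∈ S.tangent p, S.shape p (S.posN p) v =
        (S.scal p - l - 1) • v + (μ p * ⟪S.posT p, v⟫) • S.posT p) :=
  shape_posN_formulas_general S l μ hsol

end EuclideanSubmanifold
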